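/- For every positive integer n, ζ({4}^n) = 2^{2n+1} π^{4n} / (4n+2)!. -/

import Mathlib

open Real Finset

/-- Multiple zeta value with real exponents `a i`, summed over
`1 ≤ k₁ < k₂ < ⋯ < k_r`. -/
noncomputable def mzv {r : ℕ} (a : Fin r → ℝ) : ℝ :=
  ∑' f : {f : Fin r → ℕ // (∀ i, 1 ≤ f i) ∧ StrictMono f},
    ∏ i, ((f.1 i : ℝ)) ^ (-(a i))

/-- Multiple zeta star value with real exponents `a i`, summed over
`1 ≤ k₁ ≤ k₂ ≤ ⋯ ≤ k_r`. -/
noncomputable def mzsv {r : ℕ} (a : Fin r → ℝ) : ℝ :=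
  ∑' f : {f : Fin r → ℕ // (∀ i, 1 ≤ f i) ∧ Monotone f},
    ∏ i, ((f.1 i : ℝ)) ^ (-(a i))

/-!
Expanding Euler's products for `sin` and `sinh` gives, for every complex `z`,
`sin (π z) sinh (π z) = π² z² ∏ₖ (1 - z⁴/k⁴) = π² z² ∑ₙ (-z⁴)ⁿ ζ({4}ⁿ)`,
the last sum being the generating function of the elementary symmetric functions of the `k⁻⁴`.
On the other hand `sin w sinh w = ∑ₙ 2 (-4)ⁿ w⁴ⁿ⁺² / (4n+2)!`, since
`2i sin w sinh w = cos ((1-i) w) - cos ((1+i) w)`. Comparing coefficients of the two power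
series in `t = z⁴` gives `(-1)ⁿ π² ζ({4}ⁿ) = 2 (-4)ⁿ π⁴ⁿ⁺² / (4n+2)!`.
-/

open Filter Topology FormalMultilinearSeries
open scoped Nat

theorem eq_zero_of_frequently_hasSum_mul_pow_eq_zero {𝕜 : Type*} [NontriviallyNormedField 𝕜]
    [CompleteSpace 𝕜] {c : ℕ → 𝕜} (h : ∃ᶠ t in 𝓝[≠] 0, HasSum (fun n => c n * t ^ n) 0) :
    c = 0 := by
  set p := ofScalars 𝕜 c
  have hsum_eq : ∀ t, HasSum (fun n => c n * t ^ n) 0 → p.sum t = 0 := fun t ht => by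
    simpa [p, FormalMultilinearSeries.sum, ofScalars_apply_eq, mul_comm] using ht.tsum_eq
  obtain ⟨t₀, ht₀, ht₀_ne⟩ := (h.and_eventually self_mem_nhdsWithin).exists
  have hradius : 0 < p.radius := by
    have hterms : Tendsto (fun n => ‖p n‖ * (‖t₀‖₊ : ℝ) ^ n) atTop (𝓝 0) := by
      simpa [p, ofScalars_norm, norm_mul, norm_pow] using ht₀.summable.tendsto_atTop_zero.norm
    exact lt_of_lt_of_le (by simpa using ht₀_ne) (p.le_radius_of_tendsto hterms)
  have hp := (p.hasFPowerSeriesOnBall hradius).hasFPowerSeriesAt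
  have hzero := hp.analyticAt.frequently_zero_iff_eventually_zero.mp (h.mono hsum_eq)
  exact (ofScalars_series_eq_zero 𝕜).mp (hp.eq_zero_of_eventually hzero)

noncomputable def esymmTsum {ι R : Type*} [CommSemiring R] [TopologicalSpace R] (c : ι → R)
    (n : ℕ) : R :=
  ∑' s : Set.powersetCard ι n, ∏ i ∈ (s : Finset ι), c i

theorem hasSum_pow_mul_esymmTsum {ι R : Type*} [NormedCommRing R] [NormOneClass R]
    [CompleteSpace R] {c : ι → R} (hc : Summable fun i => ‖c i‖) (a : R) :
    HasSum (fun n => a ^ n * esymmTsum c n) (∏' i, (1 + a * c i)) := by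
  have hac : Summable fun i => ‖a * c i‖ :=
    (hc.mul_left ‖a‖).of_nonneg_of_le (fun _ => norm_nonneg _) fun _ => norm_mul_le _ _
  rw [tprod_one_add (summable_finsetProd_of_summable_norm hac)]
  refine ((summable_finsetProd_of_summable_norm hac).hasSum.tsum_fiberwise Finset.card).congr_fun
    fun n => ?_
  have hfiber : Summable fun s : Set.powersetCard ι n => ∏ i ∈ (s : Finset ι), c i :=
    (summable_finsetProd_of_summable_norm hc).subtype _
  rw [esymmTsum, ← hfiber.tsum_mul_left]
  refine tsum_congr fun s => ?_
  rw [Finset.prod_mul_distrib, Finset.prod_const, s.2]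

theorem esymmTsum_eq_tsum_orderEmbedding {ι R : Type*} [LinearOrder ι] [CommSemiring R]
    [TopologicalSpace R] (c : ι → R) (n : ℕ) :
    esymmTsum c n = ∑' g : Fin n ↪o ι, ∏ i, c (g i) := by
  rw [esymmTsum, ← Set.powersetCard.ofFinEmbEquiv.tsum_eq]
  refine tsum_congr fun g => ?_
  simp [Set.powersetCard.ofFinEmbEquiv_apply, Set.powersetCard.ofFinEmb]

theorem Complex.ofReal_esymmTsum {ι : Type*} (c : ι → ℝ) (n : ℕ) :
    ((esymmTsum c n : ℝ) : ℂ) = esymmTsum (fun i => (c i : ℂ)) n := by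
  simp only [esymmTsum, Complex.ofReal_tsum, Complex.ofReal_prod]

theorem mzv_const_eq_esymmTsum (n : ℕ) (s : ℝ) :
    mzv (fun _ : Fin n => s) = esymmTsum (fun k : ℕ => ((k : ℝ) + 1) ^ (-s)) n := by
  let e : (Fin n ↪o ℕ) ≃ {f : Fin n → ℕ // (∀ i, 1 ≤ f i) ∧ StrictMono f} :=
    { toFun g := ⟨fun i => g i + 1, fun _ => Nat.le_add_left _ _,
        fun _ _ h => Nat.add_lt_add_right (g.strictMono h) 1⟩
      invFun f := OrderEmbedding.ofStrictMono (fun i => f.1 i - 1) fun i j h => by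
        have := f.2.1 i; have := f.2.2 h; dsimp only; omega
      left_inv g := by ext; simp
      right_inv f := by ext i; exact Nat.sub_add_cancel (f.2.1 i) }
  rw [mzv, esymmTsum_eq_tsum_orderEmbedding, ← e.tsum_eq]
  simp [e]

namespace Complex

theorem summable_norm_div_add_one_pow (w : ℂ) {p : ℕ} (hp : 1 < p) :
    Summable fun k : ℕ => ‖w / ((k : ℂ) + 1) ^ p‖ := by
  have h := ((summable_nat_add_iff 1).mpr (Real.summable_one_div_nat_pow.mpr hp)).mul_left ‖w‖
  refine h.congr fun k => ?_
  rw [norm_div, norm_pow, ← Nat.cast_add_one, norm_natCast]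
  push_cast
  ring

theorem multipliable_one_sub_div_add_one_pow (w : ℂ) {p : ℕ} (hp : 1 < p) :
    Multipliable fun k : ℕ => 1 - w / ((k : ℂ) + 1) ^ p := by
  simpa only [sub_eq_add_neg, norm_neg] using
    multipliable_one_add_of_summable (f := fun k : ℕ => -(w / ((k : ℂ) + 1) ^ p))
      (by simpa only [norm_neg] using summable_norm_div_add_one_pow w hp)

theorem mul_tprod_one_sub_sq_div_sq (z : ℂ) :
    π * z * ∏' k : ℕ, (1 - z ^ 2 / ((k : ℂ) + 1) ^ 2) = sin (π * z) :=
  tendsto_nhds_unique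
    (((multipliable_one_sub_div_add_one_pow _ one_lt_two).tendsto_prod_tprod_nat).const_mul _)
    (tendsto_euler_sin_prod z)

theorem sin_mul_sinh_eq_mul_tprod (z : ℂ) :
    sin (π * z) * sinh (π * z) =
      π ^ 2 * z ^ 2 * ∏' k : ℕ, (1 - z ^ 4 / ((k : ℂ) + 1) ^ 4) := by
  have hsin := mul_tprod_one_sub_sq_div_sq z
  have hsinh := mul_tprod_one_sub_sq_div_sq (z * I)
  rw [← mul_assoc, sin_mul_I] at hsinh
  have hfactor : ∀ k : ℕ, 1 - z ^ 4 / ((k : ℂ) + 1) ^ 4 =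
      (1 - z ^ 2 / ((k : ℂ) + 1) ^ 2) * (1 - (z * I) ^ 2 / ((k : ℂ) + 1) ^ 2) := fun k => by
    generalize (k : ℂ) + 1 = a
    rw [mul_pow, I_sq]; ring
  rw [tprod_congr hfactor, (multipliable_one_sub_div_add_one_pow _ one_lt_two).tprod_mul
    (multipliable_one_sub_div_add_one_pow _ one_lt_two)]
  refine mul_right_cancel₀ I_ne_zero ?_
  linear_combination (-(π * z * I * ∏' k : ℕ, (1 - (z * I) ^ 2 / ((k : ℂ) + 1) ^ 2))) * hsin
    - sin (π * z) * hsinh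

theorem hasSum_sin_mul_sinh (z : ℂ) :
    HasSum (fun n : ℕ => 2 * (-4) ^ n * z ^ (4 * n + 2) / (4 * n + 2)!) (sin z * sinh z) := by
  set X := 2 * I * z ^ 2
  have hcos := (hasSum_cos (z - z * I)).sub (hasSum_cos (z + z * I))
  have hterm : ∀ n, (-1) ^ n * (z - z * I) ^ (2 * n) / (2 * n)! -
      (-1) ^ n * (z + z * I) ^ (2 * n) / (2 * n)! = (-1) ^ n * ((-X) ^ n - X ^ n) / (2 * n)! := by
    intro n
    rw [pow_mul, pow_mul, show (z - z * I) ^ 2 = -X by linear_combination z ^ 2 * I_sq,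
      show (z + z * I) ^ 2 = X by linear_combination z ^ 2 * I_sq]
    ring
  have hcos_sub_cos : cos (z - z * I) - cos (z + z * I) = 2 * I * (sin z * sinh z) := by
    rw [show z - z * I = z + (-z) * I by ring, cos_add_mul_I, cos_add_mul_I, cosh_neg, sinh_neg]
    ring
  have hX : X ^ 2 = -4 * z ^ 4 := by linear_combination 4 * z ^ 4 * I_sq
  rw [funext hterm, hcos_sub_cos] at hcos
  have hodd := (Function.Injective.hasSum_iff (g := fun j => 2 * j + 1)
    (fun a b h => by simpa using h) fun n hn => ?_).mpr hcos
  · rw [← hasSum_mul_left_iff (mul_ne_zero two_ne_zero I_ne_zero)]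
    refine hodd.congr_fun fun j => ?_
    rw [Function.comp_apply, Odd.neg_pow ⟨j, rfl⟩, Odd.neg_pow ⟨j, rfl⟩,
      show 2 * (2 * j + 1) = 4 * j + 2 by ring, pow_succ X, pow_mul X, hX]
    ring
  · obtain ⟨j, rfl⟩ : Even n := Nat.not_odd_iff_even.mp fun ⟨j, hj⟩ => hn ⟨j, hj.symm⟩
    simp only [Even.neg_pow ⟨j, rfl⟩, sub_self, mul_zero, zero_div]

end Complex

theorem esymmTsum_one_div_pow_four (n : ℕ) :
    esymmTsum (fun k : ℕ => 1 / ((k : ℂ) + 1) ^ 4) n =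
      2 ^ (2 * n + 1) * (π : ℂ) ^ (4 * n) / (4 * n + 2)! := by
  set E := esymmTsum (fun k : ℕ => 1 / ((k : ℂ) + 1) ^ 4)
  have hgen : ∀ z : ℂ, HasSum (fun n => π ^ 2 * z ^ 2 * ((-z ^ 4) ^ n * E n))
      (Complex.sin (π * z) * Complex.sinh (π * z)) := fun z => by
    have h := hasSum_pow_mul_esymmTsum (c := fun k : ℕ => 1 / ((k : ℂ) + 1) ^ 4)
      (Complex.summable_norm_div_add_one_pow 1 (by norm_num)) (-z ^ 4)
    have hprod : ∏' k : ℕ, (1 - z ^ 4 / ((k : ℂ) + 1) ^ 4) =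
        ∏' k : ℕ, (1 + -z ^ 4 * (1 / ((k : ℂ) + 1) ^ 4)) := tprod_congr fun k => by ring
    rw [Complex.sin_mul_sinh_eq_mul_tprod, hprod]
    exact h.mul_left _
  have hcoeff := eq_zero_of_frequently_hasSum_mul_pow_eq_zero
    (c := fun n => π ^ 2 * (-1) ^ n * E n - 2 * (-4) ^ n * π ^ (4 * n + 2) / (4 * n + 2)!) ?_
  · have hπ : (π : ℂ) ^ 2 * (-1) ^ n ≠ 0 := by simp [Real.pi_ne_zero]
    apply mul_left_cancel₀ hπ
    rw [sub_eq_zero.mp (congrFun hcoeff n), neg_pow (4 : ℂ), show (4 : ℂ) = 2 ^ 2 by norm_num,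
      ← pow_mul]
    ring
  · refine (eventually_nhdsWithin_of_forall fun t ht => ?_).frequently
    obtain ⟨z, rfl⟩ := IsAlgClosed.exists_pow_nat_eq t four_pos
    have hz : z ≠ 0 := ne_zero_pow four_ne_zero ht
    have h := ((hgen z).sub (Complex.hasSum_sin_mul_sinh (π * z))).mul_left (z ^ 2)⁻¹
    rw [sub_self, mul_zero] at h
    refine h.congr_fun fun n => ?_
    field_simp
    ring

theorem zeta_four_rep_general (n : ℕ) :
    mzv (fun _ : Fin n => (4 : ℝ)) =
      2 ^ (2 * n + 1) * π ^ (4 * n) / (Nat.factorial (4 * n + 2)) := by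
  apply Complex.ofReal_injective
  have hterm : ∀ k : ℕ, ((((k : ℝ) + 1) ^ (-(4 : ℝ)) : ℝ) : ℂ) = 1 / ((k : ℂ) + 1) ^ 4 :=
    fun k => by
      rw [Real.rpow_neg (by positivity), Real.rpow_ofNat]
      push_cast
      ring
  rw [mzv_const_eq_esymmTsum, Complex.ofReal_esymmTsum, funext hterm, esymmTsum_one_div_pow_four]
  push_cast
  rfl

/-- `ζ({4}^n) = 2^{2n+1} π^{4n}/(4n+2)!`. -/
theorem zeta_four_rep (n : ℕ) (hn : 1 ≤ n) :
    mzv (fun _ : Fin n => (4 : ℝ)) =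
      2 ^ (2 * n + 1) * π ^ (4 * n) / (Nat.factorial (4 * n + 2)) :=
  zeta_four_rep_general n
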